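/- (Varopoulos isoperimetric inequality) Let G be a group generated by a finite set S and let X be the Cayley graph of G with respect to S. Let A be a nonempty finite subset of the vertices of X, and let m be the minimum positive integer such that b(m) ≥ 2|A|. Then |A| ≤ 2m |∂A|. -/

import Mathlib

/-- The (outer vertex) boundary of a set `A` in a simple graph. -/
def SimpleGraph.boundarySet {V : Type*} (G : SimpleGraph V) (A : Set V) : Set V :=
  {u | u ∉ A ∧ ∃ v ∈ A, G.Adj u v}

/-- The graph distance from a vertex to a set of vertices. -/
noncomputable def SimpleGraph.distToSet {V : Type*} (G : SimpleGraph V) (u : V) (A : Set V) : ℕ :=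
  sInf ((fun v => G.dist u v) '' A)

/-- The depth of a set: the supremum over `u ∈ A` of the distance from `u` to the complement. -/
noncomputable def SimpleGraph.depthSet {V : Type*} (G : SimpleGraph V) (A : Set V) : ℕ :=
  sSup ((fun u => G.distToSet u Aᶜ) '' A)

/-- The Cayley graph of the lattice ℤ² with its standard generating set:
`u` and `v` are adjacent iff they differ by `1` in exactly one coordinate. -/
def zsqGraph : SimpleGraph (ℤ × ℤ) where
  Adj u v := |u.1 - v.1| + |u.2 - v.2| = 1
  symm := by
    constructor
    intro u v h
    beta_reduce at h ⊢
    rw [abs_sub_comm v.1, abs_sub_comm v.2]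
    exact h
  loopless := by constructor; intro u h; simp at h

/-- The Cayley graph of a group `G` with respect to a generating set `S`. -/
def cayleyGraph {G : Type*} [Group G] (S : Set G) : SimpleGraph G where
  Adj x y := x ≠ y ∧ x⁻¹ * y ∈ S ∪ S⁻¹
  symm := by
    constructor
    rintro x y ⟨hxy, hmem⟩
    refine ⟨hxy.symm, ?_⟩
    have h : y⁻¹ * x = (x⁻¹ * y)⁻¹ := by group
    rw [h]
    rcases hmem with h' | h'
    · exact Or.inr (Set.inv_mem_inv.mpr h')
    · exact Or.inl (by simpa using h')
  loopless := ⟨fun x h => h.1 rfl⟩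

/-- `ballCard S n` is the number of vertices in the ball of radius `n`
(centered at the identity) in the Cayley graph of `G` with respect to `S`. -/
noncomputable def ballCard {G : Type*} [Group G] (S : Set G) (n : ℕ) : ℕ :=
  {x : G | (cayleyGraph S).dist 1 x ≤ n}.ncard

/-!
Let `B` be the ball of radius `m`, so `|B| ≥ 2|A|`, and count the pairs `(x, g) ∈ A × B` with
`x * g ∉ A`. For fixed `x`, at most `|A|` elements `g ∈ B` have `x * g ∈ A`, so there are at least
`|A| |B| / 2` such pairs. For fixed `g`, follow a geodesic `1 = g₀, g₁, …, gₖ = g` with `k ≤ m`: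
if `x ∈ A` and `x * g ∉ A`, the translated path `x * gᵢ` leaves `A` at some step `i`, and `x` is
recovered from the boundary point `x * gᵢ₊₁` and the step `i`. So at most `m |∂A|` such `x`
exist, and `|A| |B| / 2 ≤ |B| m |∂A|`.
-/

open Finset in
theorem Finset.card_le_two_mul_of_forall_card_filter_mul_notMem_le {G : Type*} [Group G]
    [DecidableEq G] {A B : Finset G} (hAB : 2 * #A ≤ #B) {k : ℕ}
    (hk : ∀ g ∈ B, #{x ∈ A | x * g ∉ A} ≤ k) : #A ≤ 2 * k := by
  have hrow : ∀ x ∈ A, #B ≤ 2 * #{g ∈ B | x * g ∉ A} := fun x _ => by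
    have hin : #{g ∈ B | x * g ∈ A} ≤ #A :=
      card_le_card_of_injOn (x * ·) (fun g hg => (mem_filter.1 hg).2) (mul_right_injective x).injOn
    have := card_filter_add_card_filter_not (s := B) (fun g => x * g ∈ A)
    omega
  have hswap : ∑ x ∈ A, #{g ∈ B | x * g ∉ A} = ∑ g ∈ B, #{x ∈ A | x * g ∉ A} := by
    simp only [card_filter]
    exact sum_comm
  have hcount : #A * #B ≤ #B * (2 * k) := calc
    #A * #B = ∑ _x ∈ A, #B := by rw [sum_const, smul_eq_mul]
    _ ≤ ∑ x ∈ A, 2 * #{g ∈ B | x * g ∉ A} := sum_le_sum hrow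
    _ = 2 * ∑ g ∈ B, #{x ∈ A | x * g ∉ A} := by rw [← mul_sum, hswap]
    _ ≤ 2 * ∑ _g ∈ B, k := by gcongr with g hg; exact hk g hg
    _ = #B * (2 * k) := by rw [sum_const, smul_eq_mul]; ring
  rcases B.eq_empty_or_nonempty with rfl | hB
  · simp_all
  · exact le_of_mul_le_mul_right (by linarith) hB.card_pos

theorem cayleyGraph_eq_mulCayley {G : Type*} [Group G] (S : Set G) :
    cayleyGraph S = SimpleGraph.mulCayley S := by
  ext x y
  simp [cayleyGraph, SimpleGraph.mulCayley_adj, Set.mem_inv, mul_inv_rev]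

namespace SimpleGraph

variable {G : Type*} [Group G] {s : Set G}

def mulCayleyMulLeft (a : G) : mulCayley s ≃g mulCayley s :=
  ⟨Equiv.mulLeft a, mulCayley_adj_mul_iff_right⟩

@[simp]
theorem mulCayleyMulLeft_apply (a g : G) : mulCayleyMulLeft (s := s) a g = a * g := rfl

theorem mulCayley_connected (hs : Subgroup.closure s = ⊤) : (mulCayley s).Connected := by
  refine (connected_iff_exists_forall_reachable _).2 ⟨1, fun g => ?_⟩
  have hg : g ∈ Subgroup.closure s := hs ▸ Subgroup.mem_top g
  induction hg using Subgroup.closure_induction with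
  | mem g hg =>
    rcases eq_or_ne g 1 with rfl | hg1
    · rfl
    · exact Adj.reachable <| (mulCayley_adj s 1 g).2 ⟨hg1.symm, by simp [hg]⟩
  | one => rfl
  | mul a b _ _ ha hb =>
    refine ha.trans ?_
    simpa using (mulCayleyMulLeft (s := s) a).reachable_iff.2 hb
  | inv a _ ha =>
    simpa using ((mulCayleyMulLeft (s := s) a⁻¹).reachable_iff.2 ha).symm

theorem encard_mul_mem_mul_notMem_le_of_adj (A : Set G) {g h : G}
    (hgh : (mulCayley s).Adj g h) :
    {x | x * g ∈ A ∧ x * h ∉ A}.encard ≤ ((mulCayley s).boundarySet A).encard :=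
  Set.encard_le_encard_of_injOn (f := (· * h))
    (fun x hx => ⟨hx.2, x * g, hx.1, (mulCayley_adj_mul_iff_right.2 hgh).symm⟩)
    (mul_left_injective h).injOn

theorem encard_mul_mem_mul_notMem_le (A : Set G) {g h : G} (p : (mulCayley s).Walk g h) :
    {x | x * g ∈ A ∧ x * h ∉ A}.encard ≤ p.length * ((mulCayley s).boundarySet A).encard := by
  induction p with
  | nil => simp
  | @cons g k h hgk q ih =>
    calc {x | x * g ∈ A ∧ x * h ∉ A}.encard
        ≤ ({x | x * g ∈ A ∧ x * k ∉ A} ∪ {x | x * k ∈ A ∧ x * h ∉ A}).encard := by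
          refine Set.encard_le_encard fun x hx => ?_
          by_cases hk : x * k ∈ A <;> simp_all
      _ ≤ _ := Set.encard_union_le _ _
      _ ≤ _ := add_le_add (encard_mul_mem_mul_notMem_le_of_adj A hgk) ih
      _ = _ := by rw [Walk.length_cons]; push_cast; ring

theorem boundarySet_mulCayley_finite (hs : s.Finite) {A : Set G} (hA : A.Finite) :
    ((mulCayley s).boundarySet A).Finite := by
  refine (hA.mul (hs.union hs.inv)).subset fun u ⟨_, v, hv, hvu⟩ => ?_
  refine ⟨v, hv, v⁻¹ * u, ?_, mul_inv_cancel_left v u⟩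
  rcases ((mulCayley_adj s u v).1 hvu).2 with h | h
  · exact Or.inr (by simpa [Set.mem_inv, mul_inv_rev] using h)
  · exact Or.inl h

end SimpleGraph

theorem stmt_12_general {G : Type*} [Group G] (S : Set G) (hS : S.Finite)
    (hgen : Subgroup.closure S = ⊤)
    (A : Set G) (hA : A.Finite) (hne : A.Nonempty)
    (m : ℕ) (hball : 2 * A.ncard ≤ ballCard S m) :
    A.ncard ≤ 2 * m * ((cayleyGraph S).boundarySet A).ncard := by
  classical
  rw [ballCard, cayleyGraph_eq_mulCayley] at hball
  rw [cayleyGraph_eq_mulCayley]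
  set X := SimpleGraph.mulCayley S
  -- `ncard` of an infinite set is `0`, so `hball` forces the ball to be finite
  have hBfin : {g | X.dist 1 g ≤ m}.Finite :=
    Set.finite_of_ncard_pos (by have := (Set.ncard_pos hA).2 hne; omega)
  have hD : (X.boundarySet A).Finite := SimpleGraph.boundarySet_mulCayley_finite hS hA
  lift A to Finset G using hA
  obtain ⟨B, hB⟩ := hBfin.exists_finset_coe
  rw [← hB, Set.ncard_coe_finset, Set.ncard_coe_finset] at hball
  rw [Set.ncard_coe_finset, mul_assoc]
  refine Finset.card_le_two_mul_of_forall_card_filter_mul_notMem_le hball fun g hg => ?_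
  obtain ⟨p, hp⟩ := (SimpleGraph.mulCayley_connected hgen).exists_walk_length_eq_dist 1 g
  have hpm : p.length ≤ m := hp ▸ (Set.ext_iff.1 hB g).1 hg
  have hescape :
      ((A.filter (· * g ∉ A)).card : ℕ∞) ≤ (p.length * (X.boundarySet A).ncard : ℕ) := by
    rw [← Set.encard_coe_eq_coe_finsetCard, Finset.coe_filter, Nat.cast_mul, hD.cast_ncard_eq]
    simpa using SimpleGraph.encard_mul_mem_mul_notMem_le (A : Set G) p
  exact (Nat.cast_le.1 hescape).trans (Nat.mul_le_mul_right _ hpm)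

/-- **Varopoulos isoperimetric inequality.** If `A` is a nonempty finite set of vertices of
the Cayley graph of a finitely generated group and `m` is the minimum positive integer with
`b(m) ≥ 2|A|`, then `|A| ≤ 2m|∂A|`. -/
theorem stmt_12 {G : Type*} [Group G] (S : Set G) (hS : S.Finite)
    (hgen : Subgroup.closure S = ⊤)
    (A : Set G) (hA : A.Finite) (hne : A.Nonempty)
    (m : ℕ) (hm : 0 < m) (hball : 2 * A.ncard ≤ ballCard S m)
    (hmin : ∀ j : ℕ, 0 < j → j < m → ballCard S j < 2 * A.ncard) :
    A.ncard ≤ 2 * m * ((cayleyGraph S).boundarySet A).ncard :=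
  stmt_12_general S hS hgen A hA hne m hball
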